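/- Fine and Wilf theorem: if two sequences f, g : ℕ → A are periodic with periods h and k respectively (h, k > 0), and they agree on h + k - gcd(h,k) consecutive integers, then f = g on all of ℕ. -/
import Mathlib

lemma fw_mod_pred (d h : ℕ) (hdvd : d ∣ h) (hh : 0 < h) : (h - 1) % d = d - 1 := by
  rcases Nat.eq_zero_or_pos d with rfl | hd0
  · simp at hdvd; omega
  obtain ⟨a, rfl⟩ := hdvd
  have ha : 0 < a := Nat.pos_of_ne_zero (by rintro rfl; simp at hh)
  obtain ⟨b, rfl⟩ : ∃ b, a = b + 1 := ⟨a - 1, by omega⟩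
  have e0 : d * (b + 1) = b * d + d := by ring
  have e : d * (b + 1) - 1 = (d - 1) + b * d := by rw [e0]; omega
  rw [e, Nat.add_mul_mod_self_right, Nat.mod_eq_of_lt (by omega)]

lemma fw_mod_sub (d h i : ℕ) (hdvd : d ∣ h) (hle : h ≤ i) : (i - h) % d = i % d := by
  have hh0 : h % d = 0 := Nat.mod_eq_zero_of_dvd hdvd
  conv_rhs => rw [← Nat.sub_add_cancel hle]
  rw [Nat.add_mod, hh0, Nat.add_zero, Nat.mod_mod_of_dvd _ dvd_rfl]

lemma fw_core {A : Type*} : ∀ (N h k : ℕ), 0 < h → 0 < k → h + k ≤ N → ∀ (w : ℕ → A),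
    (∀ n, n + h < h + k - Nat.gcd h k → w (n + h) = w n) →
    (∀ n, n + k < h + k - Nat.gcd h k → w (n + k) = w n) →
    ∀ i j, i < h + k - Nat.gcd h k → j < h + k - Nat.gcd h k →
      i % Nat.gcd h k = j % Nat.gcd h k → w i = w j := by
  intro N
  induction N with
  | zero => intro h k hh hk hN; omega
  | succ N IH =>
    intro h k hh hk hN w ph pk i j hi hj hij
    set d := Nat.gcd h k with hd
    have hdh : d ∣ h := Nat.gcd_dvd_left _ _
    have hdk : d ∣ k := Nat.gcd_dvd_right _ _
    have hdh' : d ≤ h := Nat.le_of_dvd hh hdh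
    have hdk' : d ≤ k := Nat.le_of_dvd hk hdk
    rcases lt_trichotomy h k with hlt | heq | hgt
    · -- h < k : reduce k to k - h
      have hk' : 0 < k - h := by omega
      have hg' : Nat.gcd h (k - h) = d := by rw [hd]; exact Nat.gcd_sub_self_right (le_of_lt hlt)
      have hdk2 : d ∣ (k - h) := hg' ▸ Nat.gcd_dvd_right _ _
      have hdle : d ≤ k - h := Nat.le_of_dvd hk' hdk2
      have pk' : ∀ n, n + (k - h) < h + (k - h) - d → w (n + (k - h)) = w n := by
        intro n hn
        have e1 : w (n + (k - h) + h) = w (n + (k - h)) := ph _ (by omega)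
        have e2 : n + (k - h) + h = n + k := by omega
        have e3 : w (n + k) = w n := pk n (by omega)
        rw [← e1, e2, e3]
      have ph' : ∀ n, n + h < h + (k - h) - d → w (n + h) = w n := fun n hn => ph n (by omega)
      have reduce : ∀ m, m < h + k - d →
          ∃ m', m' < h + (k - h) - d ∧ m' % d = m % d ∧ w m' = w m := by
        intro m hm
        by_cases hmL : m < h + (k - h) - d
        · exact ⟨m, hmL, rfl, rfl⟩
        · have hhm : h ≤ m := by omega
          refine ⟨m - h, by omega, fw_mod_sub d h m hdh hhm, ?_⟩
          have := ph (m - h) (by omega)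
          rw [Nat.sub_add_cancel hhm] at this; exact this.symm
      obtain ⟨i', hi', hiM, hiw⟩ := reduce i hi
      obtain ⟨j', hj', hjM, hjw⟩ := reduce j hj
      rw [← hiw, ← hjw]
      have key := IH h (k - h) hh hk' (by omega) w
      rw [hg'] at key
      exact key ph' pk' i' j' hi' hj' (by omega)
    · -- h = k
      subst heq
      have : d = h := by rw [hd, Nat.gcd_self]
      have hih : i < h := by omega
      have hjh : j < h := by omega
      rw [Nat.mod_eq_of_lt (by omega), Nat.mod_eq_of_lt (by omega)] at hij
      rw [hij]
    · -- k < h : reduce h to h - k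
      have hh' : 0 < h - k := by omega
      have hg' : Nat.gcd (h - k) k = d := by rw [hd]; exact Nat.gcd_sub_self_left (le_of_lt hgt)
      have hdh2 : d ∣ (h - k) := hg' ▸ Nat.gcd_dvd_left _ _
      have hdle : d ≤ h - k := Nat.le_of_dvd hh' hdh2
      have ph' : ∀ n, n + (h - k) < (h - k) + k - d → w (n + (h - k)) = w n := by
        intro n hn
        have e1 : w (n + (h - k) + k) = w (n + (h - k)) := pk _ (by omega)
        have e2 : n + (h - k) + k = n + h := by omega
        have e3 : w (n + h) = w n := ph n (by omega)
        rw [← e1, e2, e3]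
      have pk' : ∀ n, n + k < (h - k) + k - d → w (n + k) = w n := fun n hn => pk n (by omega)
      have reduce : ∀ m, m < h + k - d →
          ∃ m', m' < (h - k) + k - d ∧ m' % d = m % d ∧ w m' = w m := by
        intro m hm
        by_cases hmL : m < (h - k) + k - d
        · exact ⟨m, hmL, rfl, rfl⟩
        · have hhm : k ≤ m := by omega
          refine ⟨m - k, by omega, fw_mod_sub d k m hdk hhm, ?_⟩
          have := pk (m - k) (by omega)
          rw [Nat.sub_add_cancel hhm] at this; exact this.symm
      obtain ⟨i', hi', hiM, hiw⟩ := reduce i hi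
      obtain ⟨j', hj', hjM, hjw⟩ := reduce j hj
      rw [← hiw, ← hjw]
      have key := IH (h - k) k hh' hk (by omega) w
      rw [hg'] at key
      exact key ph' pk' i' j' hi' hj' (by omega)

/-- Fine and Wilf theorem: if `f` and `g` are periodic with periods `h` and `k`
and agree on `h + k - gcd h k` consecutive integers, then they agree everywhere. -/
theorem fine_wilf {A : Type*} (f g : ℕ → A) (h k : ℕ) (hh : 0 < h) (hk : 0 < k)
    (hf : ∀ n, f (n + h) = f n) (hg : ∀ n, g (n + k) = g n)
    (n₀ : ℕ) (hagree : ∀ n, n₀ ≤ n → n < n₀ + (h + k - Nat.gcd h k) → f n = g n) :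
    ∀ n, f n = g n := by
  intro n
  set d := Nat.gcd h k with hd
  have hdh : d ∣ h := Nat.gcd_dvd_left _ _
  have hdk : d ∣ k := Nat.gcd_dvd_right _ _
  have hdh' : d ≤ h := Nat.le_of_dvd hh hdh
  have hdk' : d ≤ k := Nat.le_of_dvd hk hdk
  have pf : ∀ x t, f (x + h * t) = f x := by
    intro x t
    induction t with
    | zero => simp
    | succ t ih =>
      have e : x + h * (t + 1) = (x + h * t) + h := by ring
      rw [e, hf, ih]
  have pg : ∀ x t, g (x + k * t) = g x := by
    intro x t
    induction t with
    | zero => simp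
    | succ t ih =>
      have e : x + k * (t + 1) = (x + k * t) + k := by ring
      rw [e, hg, ih]
  set w : ℕ → A := fun i => f (n₀ + i) with hw
  have ph : ∀ m, m + h < h + k - d → w (m + h) = w m := by
    intro m _
    show f (n₀ + (m + h)) = f (n₀ + m)
    rw [show n₀ + (m + h) = (n₀ + m) + h by ring, hf]
  have pk : ∀ m, m + k < h + k - d → w (m + k) = w m := by
    intro m hm
    show f (n₀ + (m + k)) = f (n₀ + m)
    have e1 : f (n₀ + (m + k)) = g (n₀ + (m + k)) := hagree _ (by omega) (by omega)
    have e2 : g (n₀ + (m + k)) = g (n₀ + m) := by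
      rw [show n₀ + (m + k) = (n₀ + m) + k by ring, hg]
    have e3 : g (n₀ + m) = f (n₀ + m) := (hagree _ (by omega) (by omega)).symm
    rw [e1, e2, e3]
  set M₁ := n + (h - 1) * n₀ with hM₁
  set M₂ := n + (k - 1) * n₀ with hM₂
  have hn₀h : n₀ ≤ h * n₀ := Nat.le_mul_of_pos_left n₀ hh
  have hn₀k : n₀ ≤ k * n₀ := Nat.le_mul_of_pos_left n₀ hk
  have hfn : f n = w (M₁ % h) := by
    have e0 : f n = f (n + h * n₀) := (pf n n₀).symm
    have e1 : n + h * n₀ = n₀ + M₁ := by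
      rw [hM₁, Nat.sub_one_mul]; omega
    have e2 : f (n₀ + M₁) = f (n₀ + M₁ % h) := by
      conv_lhs => rw [← Nat.mod_add_div M₁ h, ← Nat.add_assoc]
      exact pf _ _
    rw [e0, e1, e2]
  have hgn : g n = g (n₀ + M₂ % k) := by
    have e0 : g n = g (n + k * n₀) := (pg n n₀).symm
    have e1 : n + k * n₀ = n₀ + M₂ := by
      rw [hM₂, Nat.sub_one_mul]; omega
    have e2 : g (n₀ + M₂) = g (n₀ + M₂ % k) := by
      conv_lhs => rw [← Nat.mod_add_div M₂ k, ← Nat.add_assoc]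
      exact pg _ _
    rw [e0, e1, e2]
  have hM₁h : M₁ % h < h := Nat.mod_lt _ hh
  have hM₂k : M₂ % k < k := Nat.mod_lt _ hk
  have hgw : g n = w (M₂ % k) := by
    rw [hgn]
    exact (hagree _ (by omega) (by omega)).symm
  have hmod : (M₁ % h) % d = (M₂ % k) % d := by
    rw [Nat.mod_mod_of_dvd _ hdh, Nat.mod_mod_of_dvd _ hdk, hM₁, hM₂]
    conv_lhs => rw [Nat.add_mod, Nat.mul_mod, fw_mod_pred d h hdh hh]
    conv_rhs => rw [Nat.add_mod, Nat.mul_mod, fw_mod_pred d k hdk hk]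
  rw [hfn, hgw]
  exact fw_core (h + k) h k hh hk le_rfl w ph pk _ _ (by omega) (by omega) hmod
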